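/- There exists a real number b̃ > 1 such that for all a ∈ [0, 1) and all b ∈ [1, b̃], one has (4 − 5a)·log₁₀(b) ≤ B(a, b) − a, where B(a, b) = 4 − ((4 − a)²/(2·(1 − a)))·(b − √(b² − 12·(1 − a)·b/(4 − a)²)). -/

import Mathlib

/-!
With `c = (4 - a)² / (2(1 - a))` one has `12(1 - a)/(4 - a)² = 6/c`, so
`B(a, b) - a = (4 - a) - cb + c√(b² - 6b/c)` and
`c²(b² - 6b/c) = (cb - (4 - a))² + (4 - a)²(b - 1)`. Hence `L ≤ B(a, b) - a` as soon as
`2(cb - (4 - a))L + L² ≤ (4 - a)²(b - 1)`, with no sign condition on `L`.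
For `L = (4 - 5a) log₁₀ b` and `1 ≤ b ≤ 1.001` this follows from `log₁₀ b ≤ (b - 1)/2.3`:
when `a ≤ 4/5` it reduces to a cubic inequality in `a`, and when `a > 4/5` the cross term
is nonpositive and `L² ≤ log₁₀ b`.
-/

/-- The quality-ratio bound function of the defection-free scheme. -/
noncomputable def B (a b : ℝ) : ℝ :=
  4 - ((4 - a) ^ 2 / (2 * (1 - a))) *
    (b - Real.sqrt (b ^ 2 - 12 * (1 - a) * b / (4 - a) ^ 2))

open Real

lemma log_ten_gt_d1 : 2.3 < log 10 := by
  have h : (2 : ℝ) ^ 93 < 10 ^ 28 := by norm_num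
  have := log_lt_log (by positivity) h
  rw [log_pow, log_pow] at this
  norm_num at this
  linarith [log_two_gt_d9]

lemma mul_logb_ten_le_sub_one {b : ℝ} (hb : 1 ≤ b) : 2.3 * logb 10 b ≤ b - 1 := by
  have hlog10 := log_ten_gt_d1
  calc 2.3 * logb 10 b = 2.3 / log 10 * log b := by rw [logb]; ring
    _ ≤ 1 * log b := by
      gcongr
      · exact log_nonneg hb
      · rw [div_le_one (by linarith)]; exact hlog10.le
    _ ≤ b - 1 := by rw [one_mul]; exact log_le_sub_one_of_pos (by linarith)

lemma le_B_sub_self_of_sq_le {a b L : ℝ} (ha : a < 1)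
    (h : 2 * ((4 - a) ^ 2 / (2 * (1 - a)) * b - (4 - a)) * L + L ^ 2 ≤ (4 - a) ^ 2 * (b - 1)) :
    L ≤ B a b - a := by
  have h1a : 0 < 1 - a := by linarith
  have h4a : 4 - a ≠ 0 := by linarith
  set c := (4 - a) ^ 2 / (2 * (1 - a)) with hc
  have hc0 : 0 < c := div_pos (by positivity) (by positivity)
  set D := b ^ 2 - 12 * (1 - a) * b / (4 - a) ^ 2
  have hcD : c ^ 2 * D = (c * b - (4 - a)) ^ 2 + (4 - a) ^ 2 * (b - 1) := by
    simp only [D, hc]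
    field_simp
    ring
  have hT : (c * b - (4 - a) + L) ^ 2 ≤ c ^ 2 * D := by nlinarith
  have hsqrt : √(c ^ 2 * D) = c * √D := by
    rw [sqrt_mul (sq_nonneg c), sqrt_sq hc0.le]
  have hTS : c * b - (4 - a) + L ≤ c * √D :=
    hsqrt ▸ (le_abs_self _).trans (abs_le_sqrt hT)
  rw [B]
  linarith

lemma excess_bound_of_le_four_fifths {a : ℝ} (ha : a ≤ 4 / 5) :
    2 * (1.001 * ((4 - a) ^ 2 / (2 * (1 - a))) - (4 - a)) * (4 - 5 * a) + 0.007
      ≤ 2.3 * (4 - a) ^ 2 := by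
  have h1a : 0 < 1 - a := by linarith
  have hpoly : 2 * (1.001 * (4 - a) ^ 2 - 2 * (1 - a) * (4 - a)) * (4 - 5 * a)
      + 0.007 * (2 * (1 - a)) ≤ 2.3 * (4 - a) ^ 2 * (2 * (1 - a)) := by
    nlinarith [mul_nonneg (sub_nonneg.2 ha) (sq_nonneg (a - 0.37))]
  refine le_of_mul_le_mul_right (hpoly.trans_eq' ?_) (by positivity)
  field_simp [h1a.ne']

lemma quadratic_criterion_of_log_bound {a b m : ℝ} (ha0 : 0 ≤ a) (ha1 : a < 1) (hb1 : 1 ≤ b)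
    (hb : b ≤ 1.001) (hm0 : 0 ≤ m) (hm : 2.3 * m ≤ b - 1) :
    2 * ((4 - a) ^ 2 / (2 * (1 - a)) * b - (4 - a)) * ((4 - 5 * a) * m) + ((4 - 5 * a) * m) ^ 2
      ≤ (4 - a) ^ 2 * (b - 1) := by
  have h1a : 0 < 1 - a := by linarith
  set c := (4 - a) ^ 2 / (2 * (1 - a)) with hc
  have hc0 : 0 < c := div_pos (pow_pos (by linarith) 2) (by linarith)
  have hcb : 4 - a ≤ c * b := by
    have : 4 - a ≤ c := by rw [hc, le_div_iff₀ (by linarith)]; nlinarith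
    nlinarith
  rcases le_or_gt a (4 / 5) with ha | ha
  · have hk : 0 ≤ 4 - 5 * a := by linarith
    calc 2 * (c * b - (4 - a)) * ((4 - 5 * a) * m) + ((4 - 5 * a) * m) ^ 2
        = m * (2 * (c * b - (4 - a)) * (4 - 5 * a) + (4 - 5 * a) ^ 2 * m) := by ring
      _ ≤ m * (2 * (1.001 * c - (4 - a)) * (4 - 5 * a) + 0.007) := by
        have hcb' : c * b ≤ 1.001 * c := by nlinarith
        have hkm : (4 - 5 * a) ^ 2 * m ≤ 0.007 := by nlinarith
        exact mul_le_mul_of_nonneg_left (by nlinarith) hm0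
      _ ≤ m * (2.3 * (4 - a) ^ 2) := by gcongr; exact excess_bound_of_le_four_fifths ha
      _ ≤ (4 - a) ^ 2 * (b - 1) := by nlinarith
  · have hk : (4 - 5 * a) ^ 2 ≤ 1 := by nlinarith
    have hcross : 2 * (c * b - (4 - a)) * ((4 - 5 * a) * m) ≤ 0 :=
      mul_nonpos_of_nonneg_of_nonpos (by linarith)
        (mul_nonpos_of_nonpos_of_nonneg (by linarith) hm0)
    have hsq : ((4 - 5 * a) * m) ^ 2 ≤ m := by
      rw [mul_pow]
      nlinarith [mul_le_mul_of_nonneg_right hk (sq_nonneg m)]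
    nlinarith

/-- there exists `b̃ > 1` such that for all `a ∈ [0, 1)` and all
`b ∈ [1, b̃]`, the ratio gain `B(a, b) − a` is at least `(4 − 5a)·log₁₀ b`. -/
theorem ratio_gain_log_lower_bound :
    ∃ btilde : ℝ, 1 < btilde ∧
      ∀ a b : ℝ, 0 ≤ a → a < 1 → 1 ≤ b → b ≤ btilde →
        (4 - 5 * a) * Real.logb 10 b ≤ B a b - a :=
  ⟨1.001, by norm_num, fun _ _ ha0 ha1 hb1 hb => le_B_sub_self_of_sq_le ha1 <|
    quadratic_criterion_of_log_bound ha0 ha1 hb1 hb (logb_nonneg (by norm_num) hb1)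
      (mul_logb_ten_le_sub_one hb1)⟩
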